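/- Let j, k ≥ 1 with n−j−k ≥ 1 and let λ satisfy k < λ < n−j. Then applying to f₀(t) = t^{−λ} the operator I_{j,k}, one gets (I_{j,k} f₀)(s) = c_{j,k} s^{k−λ} for all s > 0, where c_{j,k} = π^{k/2} Γ((n−k)/2) Γ((λ−k)/2) Γ((n−j−λ)/2) / (Γ((n−j−k)/2) Γ(λ/2) Γ((n−λ)/2)). -/

import Mathlib

/-! Both Erdélyi–Kober integrals of a power are beta integrals. Substituting `r = t x^{-1/2}`
turns the inner one into `t^{k-λ} Γ((λ-k)/2) / Γ(λ/2)`, so the integrand of the outer one is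
again a power `r^{2α-2}` with `α = (n-j-λ)/2`, and `r = s x^{1/2}` turns that into
`s^{j+2α-2} Γ(α) / Γ((n-λ)/2)`. Working in `ℝ≥0∞` makes every step free of integrability
side conditions. -/

open MeasureTheory Set ENNReal

/-- The Erdélyi–Kober fractional integral of the first kind. -/
noncomputable def EKplus (β : ℝ) (g : ℝ → ℝ≥0∞) (t : ℝ) : ℝ≥0∞ :=
  ENNReal.ofReal (2 / Real.Gamma β) *
    ∫⁻ r in Ioo (0:ℝ) t, ENNReal.ofReal ((t ^ 2 - r ^ 2) ^ (β - 1) * r) * g r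

/-- The Erdélyi–Kober fractional integral of the second kind. -/
noncomputable def EKminus (β : ℝ) (g : ℝ → ℝ≥0∞) (t : ℝ) : ℝ≥0∞ :=
  ENNReal.ofReal (2 / Real.Gamma β) *
    ∫⁻ r in Ioi t, ENNReal.ofReal ((r ^ 2 - t ^ 2) ^ (β - 1) * r) * g r

open ProbabilityTheory in
theorem lintegral_Ioo_rpow_mul_one_sub_rpow {a b : ℝ} (ha : 0 < a) (hb : 0 < b) :
    ∫⁻ x in Ioo (0 : ℝ) 1, ENNReal.ofReal (x ^ (a - 1) * (1 - x) ^ (b - 1)) =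
      ENNReal.ofReal (beta a b) := by
  have h := lintegral_betaPDF_eq_one ha hb
  simp_rw [lintegral_betaPDF, mul_assoc, ENNReal.ofReal_mul (one_div_pos.2 (beta_pos ha hb)).le,
    lintegral_const_mul' _ _ ofReal_ne_top] at h
  rw [mul_comm] at h
  rw [ENNReal.eq_inv_of_mul_eq_one_left h, ← ofReal_inv_of_pos (one_div_pos.2 (beta_pos ha hb)),
    one_div, inv_inv]

theorem injOn_mul_rpow {c p : ℝ} (hc : c ≠ 0) (hp : p ≠ 0) :
    InjOn (fun x : ℝ => c * x ^ p) (Ioi 0) := fun x hx y hy hxy =>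
  Real.rpow_left_injOn hp (le_of_lt hx : 0 ≤ x) (le_of_lt hy : 0 ≤ y) (mul_left_cancel₀ hc hxy)

theorem lintegral_image_mul_rpow {c p : ℝ} (hc : 0 < c) (hp : p ≠ 0) (g : ℝ → ℝ≥0∞) :
    ∫⁻ r in (fun x => c * x ^ p) '' Ioo 0 1, g r =
      ∫⁻ x in Ioo 0 1, ENNReal.ofReal (c * |p| * x ^ (p - 1)) * g (c * x ^ p) := by
  rw [lintegral_image_eq_lintegral_abs_deriv_mul measurableSet_Ioo
    (fun x hx => ((Real.hasDerivAt_rpow_const (Or.inl hx.1.ne')).const_mul c).hasDerivWithinAt)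
    ((injOn_mul_rpow hc.ne' hp).mono Ioo_subset_Ioi_self)]
  refine setLIntegral_congr_fun measurableSet_Ioo fun x hx => ?_
  rw [abs_mul, abs_mul, abs_of_pos hc, abs_of_pos (Real.rpow_pos_of_pos hx.1 _), mul_assoc]

theorem image_mul_rpow_Ioo_zero_one_of_pos {c p : ℝ} (hc : 0 < c) (hp : 0 < p) :
    (fun x => c * x ^ p) '' Ioo 0 1 = Ioo 0 c := by
  ext y
  constructor
  · rintro ⟨x, ⟨hx0, hx1⟩, rfl⟩
    exact ⟨by positivity, mul_lt_of_lt_one_right hc (Real.rpow_lt_one hx0.le hx1 hp)⟩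
  · rintro ⟨hy0, hyc⟩
    refine ⟨(y / c) ^ p⁻¹, ⟨by positivity, Real.rpow_lt_one (by positivity)
      ((div_lt_one hc).2 hyc) (inv_pos.2 hp)⟩, ?_⟩
    simp only [Real.rpow_inv_rpow (div_pos hy0 hc).le hp.ne']
    field_simp

theorem image_mul_rpow_Ioo_zero_one_of_neg {c p : ℝ} (hc : 0 < c) (hp : p < 0) :
    (fun x => c * x ^ p) '' Ioo 0 1 = Ioi c := by
  ext y
  constructor
  · rintro ⟨x, ⟨hx0, hx1⟩, rfl⟩
    exact lt_mul_of_one_lt_right hc (Real.one_lt_rpow_of_pos_of_lt_one_of_neg hx0 hx1 hp)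
  · intro (hyc : c < y)
    refine ⟨(y / c) ^ p⁻¹, ⟨Real.rpow_pos_of_pos (div_pos (hc.trans hyc) hc) _,
      Real.rpow_lt_one_of_one_lt_of_neg ((one_lt_div hc).2 hyc) (inv_lt_zero.2 hp)⟩, ?_⟩
    simp only [Real.rpow_inv_rpow (div_pos (hc.trans hyc) hc).le hp.ne]
    field_simp

theorem jacobian_mul_sq_sub_sq_rpow_neg {β lam t x : ℝ} (ht : 0 < t) (hx0 : 0 < x)
    (hx1 : x < 1) :
    t * |-(1/2 : ℝ)| * x ^ (-(1/2 : ℝ) - 1) *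
        (((t * x ^ (-(1/2 : ℝ))) ^ 2 - t ^ 2) ^ (β - 1) * (t * x ^ (-(1/2 : ℝ))) *
          (t * x ^ (-(1/2 : ℝ))) ^ (-lam)) =
      t ^ (2 * β - lam) / 2 * (x ^ ((lam / 2 - β) - 1) * (1 - x) ^ (β - 1)) := by
  have hpow : ∀ q : ℝ, (t * x ^ (-(1/2 : ℝ))) ^ q = t ^ q * x ^ (-(1/2) * q) := fun q => by
    rw [Real.mul_rpow ht.le (Real.rpow_nonneg hx0.le _), ← Real.rpow_mul hx0.le]
  have hsq : ((t * x ^ (-(1/2 : ℝ))) ^ 2 - t ^ 2) ^ (β - 1) =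
      t ^ (2 * (β - 1)) * x ^ (-(β - 1)) * (1 - x) ^ (β - 1) := by
    rw [← Real.rpow_natCast, Nat.cast_ofNat, hpow, show -(1/2) * (2 : ℝ) = -1 by norm_num,
      Real.rpow_neg_one, ← Real.rpow_natCast, Nat.cast_ofNat,
      show t ^ (2 : ℝ) * x⁻¹ - t ^ (2 : ℝ) = t ^ (2 : ℝ) * x⁻¹ * (1 - x) by field_simp,
      Real.mul_rpow (by positivity) (by linarith), Real.mul_rpow (by positivity) (by positivity),
      ← Real.rpow_mul ht.le, Real.inv_rpow hx0.le, ← Real.rpow_neg hx0.le]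
  have ht' : t * t ^ (2 * (β - 1)) * t * t ^ (-lam) = t ^ (2 * β - lam) := by
    rw [show 2 * β - lam = 1 + 2 * (β - 1) + 1 + -lam by ring, Real.rpow_add ht,
      Real.rpow_add ht, Real.rpow_add ht, Real.rpow_one]
  have hx' : x ^ (-(1/2 : ℝ) - 1) * x ^ (-(β - 1)) * x ^ (-(1/2 : ℝ)) * x ^ (-(1/2) * -lam) =
      x ^ ((lam / 2 - β) - 1) := by
    rw [← Real.rpow_add hx0, ← Real.rpow_add hx0, ← Real.rpow_add hx0]
    ring_nf
  rw [hsq, hpow, ← ht', ← hx', abs_neg, abs_of_pos (by norm_num : (0 : ℝ) < 1 / 2)]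
  ring

theorem jacobian_mul_sq_sub_sq_rpow {α β s x : ℝ} (hs : 0 < s) (hx0 : 0 < x) (hx1 : x < 1) :
    s * |(1/2 : ℝ)| * x ^ ((1/2 : ℝ) - 1) *
        ((s ^ 2 - (s * x ^ (1/2 : ℝ)) ^ 2) ^ (β - 1) * (s * x ^ (1/2 : ℝ)) *
          (s * x ^ (1/2 : ℝ)) ^ (2 * α - 2)) =
      s ^ (2 * β + 2 * α - 2) / 2 * (x ^ (α - 1) * (1 - x) ^ (β - 1)) := by
  have hpow : ∀ q : ℝ, (s * x ^ (1/2 : ℝ)) ^ q = s ^ q * x ^ (1/2 * q) := fun q => by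
    rw [Real.mul_rpow hs.le (Real.rpow_nonneg hx0.le _), ← Real.rpow_mul hx0.le]
  have hsq : (s ^ 2 - (s * x ^ (1/2 : ℝ)) ^ 2) ^ (β - 1) =
      s ^ (2 * (β - 1)) * (1 - x) ^ (β - 1) := by
    rw [mul_pow, ← Real.rpow_natCast (x ^ (1/2 : ℝ)), ← Real.rpow_mul hx0.le,
      show 1/2 * ((2 : ℕ) : ℝ) = 1 by norm_num, Real.rpow_one, ← mul_one_sub,
      Real.mul_rpow (by positivity) (by linarith), ← Real.rpow_natCast s, ← Real.rpow_mul hs.le,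
      Nat.cast_ofNat]
  have hs' : s * s ^ (2 * (β - 1)) * s * s ^ (2 * α - 2) = s ^ (2 * β + 2 * α - 2) := by
    rw [show 2 * β + 2 * α - 2 = 1 + 2 * (β - 1) + 1 + (2 * α - 2) by ring, Real.rpow_add hs,
      Real.rpow_add hs, Real.rpow_add hs, Real.rpow_one]
  have hx' : x ^ ((1/2 : ℝ) - 1) * x ^ (1/2 : ℝ) * x ^ (1/2 * (2 * α - 2)) = x ^ (α - 1) := by
    rw [← Real.rpow_add hx0, ← Real.rpow_add hx0]
    ring_nf
  rw [hsq, hpow, ← hs', ← hx', abs_of_pos (by norm_num : (0 : ℝ) < 1 / 2)]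
  ring

open ProbabilityTheory in
theorem lintegral_Ioi_sq_sub_sq_rpow_mul_rpow_neg {β lam t : ℝ} (hβ : 0 < β) (hlam : 2 * β < lam)
    (ht : 0 < t) :
    ∫⁻ r in Ioi t, ENNReal.ofReal ((r ^ 2 - t ^ 2) ^ (β - 1) * r) * ENNReal.ofReal (r ^ (-lam)) =
      ENNReal.ofReal (t ^ (2 * β - lam) / 2 * beta (lam / 2 - β) β) := by
  rw [← image_mul_rpow_Ioo_zero_one_of_neg ht (by norm_num : -(1/2 : ℝ) < 0),
    lintegral_image_mul_rpow ht (by norm_num),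
    setLIntegral_congr_fun measurableSet_Ioo fun x ⟨hx0, hx1⟩ => by
      rw [← ofReal_mul' (by positivity), ← ofReal_mul (by positivity),
        jacobian_mul_sq_sub_sq_rpow_neg ht hx0 hx1, ofReal_mul (by positivity)],
    lintegral_const_mul' _ _ ofReal_ne_top, lintegral_Ioo_rpow_mul_one_sub_rpow (by linarith) hβ,
    ← ofReal_mul (by positivity)]

open ProbabilityTheory in
theorem lintegral_Ioo_sq_sub_sq_rpow_mul_rpow {α β s : ℝ} (hα : 0 < α) (hβ : 0 < β)
    (hs : 0 < s) :
    ∫⁻ r in Ioo 0 s, ENNReal.ofReal ((s ^ 2 - r ^ 2) ^ (β - 1) * r) *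
        ENNReal.ofReal (r ^ (2 * α - 2)) =
      ENNReal.ofReal (s ^ (2 * β + 2 * α - 2) / 2 * beta α β) := by
  rw [← image_mul_rpow_Ioo_zero_one_of_pos hs (by norm_num : (0 : ℝ) < 1/2),
    lintegral_image_mul_rpow hs (by norm_num),
    setLIntegral_congr_fun measurableSet_Ioo fun x ⟨hx0, hx1⟩ => by
      rw [← ofReal_mul' (by positivity), ← ofReal_mul (by positivity),
        jacobian_mul_sq_sub_sq_rpow hs hx0 hx1, ofReal_mul (by positivity)],
    lintegral_const_mul' _ _ ofReal_ne_top, lintegral_Ioo_rpow_mul_one_sub_rpow hα hβ,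
    ← ofReal_mul (by positivity)]

theorem EKminus_rpow_neg {β lam t : ℝ} (hβ : 0 < β) (hlam : 2 * β < lam) (ht : 0 < t) :
    EKminus β (fun r => ENNReal.ofReal (r ^ (-lam))) t =
      ENNReal.ofReal (Real.Gamma (lam / 2 - β) / Real.Gamma (lam / 2) * t ^ (2 * β - lam)) := by
  rw [EKminus, lintegral_Ioi_sq_sub_sq_rpow_mul_rpow_neg hβ hlam ht, ← ofReal_mul (by positivity),
    ProbabilityTheory.beta, sub_add_cancel]
  congr 1
  field_simp [(Real.Gamma_pos_of_pos hβ).ne']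

theorem EKplus_rpow {α β s : ℝ} (hα : 0 < α) (hβ : 0 < β) (hs : 0 < s) :
    EKplus β (fun r => ENNReal.ofReal (r ^ (2 * α - 2))) s =
      ENNReal.ofReal (Real.Gamma α / Real.Gamma (α + β) * s ^ (2 * β + 2 * α - 2)) := by
  rw [EKplus, lintegral_Ioo_sq_sub_sq_rpow_mul_rpow hα hβ hs, ← ofReal_mul (by positivity),
    ProbabilityTheory.beta]
  congr 1
  field_simp [(Real.Gamma_pos_of_pos hβ).ne']

theorem EKplus_congr {β t : ℝ} {g g' : ℝ → ℝ≥0∞} (h : EqOn g g' (Ioo 0 t)) :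
    EKplus β g t = EKplus β g' t := by
  rw [EKplus, EKplus, setLIntegral_congr_fun measurableSet_Ioo fun r hr => by rw [h hr]]

theorem EKplus_const_mul {β t : ℝ} {c : ℝ≥0∞} (hc : c ≠ ∞) (g : ℝ → ℝ≥0∞) :
    EKplus β (fun r => c * g r) t = c * EKplus β g t := by
  simp only [EKplus, mul_left_comm _ c, lintegral_const_mul' _ _ hc]

theorem mixed_radon_power_general (n j k ℓ : ℕ) (hj : 1 ≤ j) (hk : 1 ≤ k)
    (hn : n = j + k + ℓ)
    (lam : ℝ) (hlam1 : (k : ℝ) < lam) (hlam2 : lam < (n : ℝ) - j) :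
    ∀ s > (0:ℝ),
      ENNReal.ofReal
          ((Real.pi ^ ((k : ℝ) / 2) * Real.Gamma (((n : ℝ) - k) / 2) /
              Real.Gamma (((n : ℝ) - j - k) / 2)) / s ^ ((n : ℝ) - k - 2)) *
        EKplus ((j : ℝ) / 2)
          (fun r => ENNReal.ofReal (r ^ ((ℓ : ℝ) - 2)) *
            EKminus ((k : ℝ) / 2) (fun t => ENNReal.ofReal (t ^ (-lam))) r) s
      = ENNReal.ofReal
          ((Real.pi ^ ((k : ℝ) / 2) * Real.Gamma (((n : ℝ) - k) / 2) *
              Real.Gamma ((lam - k) / 2) * Real.Gamma (((n : ℝ) - j - lam) / 2) /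
              (Real.Gamma (((n : ℝ) - j - k) / 2) * Real.Gamma (lam / 2) *
                Real.Gamma (((n : ℝ) - lam) / 2))) * s ^ ((k : ℝ) - lam)) := by
  intro s hs
  have hn' : (n : ℝ) = j + k + ℓ := by exact_mod_cast hn
  have hj' : (0 : ℝ) < j / 2 := div_pos (Nat.cast_pos.mpr hj) two_pos
  have hk' : (0 : ℝ) < k / 2 := div_pos (Nat.cast_pos.mpr hk) two_pos
  have := Real.Gamma_pos_of_pos (show (0 : ℝ) < ((n : ℝ) - k) / 2 by linarith)
  have := Real.Gamma_pos_of_pos (show (0 : ℝ) < ((n : ℝ) - j - k) / 2 by linarith)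
  have := Real.Gamma_pos_of_pos (show (0 : ℝ) < lam / 2 - k / 2 by linarith)
  have := Real.Gamma_pos_of_pos (show (0 : ℝ) < lam / 2 by linarith)
  have := Real.Gamma_pos_of_pos (show (0 : ℝ) < ((n : ℝ) - lam) / 2 by linarith)
  set α := ((n : ℝ) - j - lam) / 2 with hα
  have hinner : EqOn
      (fun r => ENNReal.ofReal (r ^ ((ℓ : ℝ) - 2)) *
        EKminus ((k : ℝ) / 2) (fun t => ENNReal.ofReal (t ^ (-lam))) r)
      (fun r => ENNReal.ofReal (Real.Gamma (lam / 2 - k / 2) / Real.Gamma (lam / 2)) *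
        ENNReal.ofReal (r ^ (2 * α - 2))) (Ioo 0 s) := fun r ⟨hr, _⟩ => by
    dsimp only
    rw [EKminus_rpow_neg hk' (by linarith) hr, ← ofReal_mul (by positivity),
      ← ofReal_mul (by positivity), show 2 * α - 2 = ((ℓ : ℝ) - 2) + (2 * (k / 2) - lam) by
        rw [hα, hn']; ring, Real.rpow_add hr]
    ring_nf
  rw [EKplus_congr hinner, EKplus_const_mul ofReal_ne_top, EKplus_rpow (by linarith) hj' hs,
    ← ofReal_mul (by positivity), ← ofReal_mul (by positivity)]
  congr 1
  rw [show α + j / 2 = ((n : ℝ) - lam) / 2 by ring, show lam / 2 - k / 2 = (lam - k) / 2 by ring,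
    show 2 * (j / 2) + 2 * α - 2 = ((k : ℝ) - lam) + ((n : ℝ) - k - 2) by ring,
    Real.rpow_add hs]
  field_simp

/-- The mixed Radon transform of the radial power `f₀(t) = t^{−λ}`, `k < λ < n−j`:
`(I_{j,k} f₀)(s) = c_{j,k} s^{k−λ}`. -/
theorem mixed_radon_power (n j k ℓ : ℕ) (hj : 1 ≤ j) (hk : 1 ≤ k)
    (hℓ : 1 ≤ ℓ) (hn : n = j + k + ℓ)
    (lam : ℝ) (hlam1 : (k : ℝ) < lam) (hlam2 : lam < (n : ℝ) - j) :
    ∀ s > (0:ℝ),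
      ENNReal.ofReal
          ((Real.pi ^ ((k : ℝ) / 2) * Real.Gamma (((n : ℝ) - k) / 2) /
              Real.Gamma (((n : ℝ) - j - k) / 2)) / s ^ ((n : ℝ) - k - 2)) *
        EKplus ((j : ℝ) / 2)
          (fun r => ENNReal.ofReal (r ^ ((ℓ : ℝ) - 2)) *
            EKminus ((k : ℝ) / 2) (fun t => ENNReal.ofReal (t ^ (-lam))) r) s
      = ENNReal.ofReal
          ((Real.pi ^ ((k : ℝ) / 2) * Real.Gamma (((n : ℝ) - k) / 2) *
              Real.Gamma ((lam - k) / 2) * Real.Gamma (((n : ℝ) - j - lam) / 2) /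
              (Real.Gamma (((n : ℝ) - j - k) / 2) * Real.Gamma (lam / 2) *
                Real.Gamma (((n : ℝ) - lam) / 2))) * s ^ ((k : ℝ) - lam)) :=
  mixed_radon_power_general n j k ℓ hj hk hn lam hlam1 hlam2
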